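/- The splitting number 𝔰 has uncountable cofinality. -/

import Mathlib

open Set

def Splits (x a : Set ℕ) : Prop := (a ∩ x).Infinite ∧ (a \ x).Infinite

def SplittingFamily (F : Set (Set ℕ)) : Prop :=
  ∀ a : Set ℕ, a.Infinite → ∃ x ∈ F, Splits x a

def OmegaOmegaSplitting (F : Set (Set ℕ)) : Prop :=
  ∀ a : ℕ → Set ℕ, (∀ n, (a n).Infinite) →
    ∃ x ∈ F, {n | (a n ∩ x).Infinite}.Infinite ∧ {n | (a n \ x).Infinite}.Infinite

noncomputable def sNum : Cardinal :=
  sInf {c | ∃ F : Set (Set ℕ), SplittingFamily F ∧ Cardinal.mk F = c}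

noncomputable def sOmegaOmegaNum : Cardinal :=
  sInf {c | ∃ F : Set (Set ℕ), OmegaOmegaSplitting F ∧ Cardinal.mk F = c}

def ADFamily (A : Set (Set ℕ)) : Prop :=
  (∀ a ∈ A, a.Infinite) ∧ A.Pairwise fun a b => (a ∩ b).Finite

def MADFamily (A : Set (Set ℕ)) : Prop :=
  ADFamily A ∧ A.Infinite ∧ ∀ B, ADFamily B → A ⊆ B → A = B

noncomputable def aNum : Cardinal :=
  sInf {c | ∃ A : Set (Set ℕ), MADFamily A ∧ Cardinal.mk A = c}

/-- The ideal generated by an a.d. family together with the finite sets: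
`b ∈ adIdeal A` iff `b ⊆* a₀ ∪ ⋯ ∪ a_k` for finitely many members of `A`. -/
def adIdeal (A : Set (Set ℕ)) : Set (Set ℕ) :=
  {b | ∃ S : Finset (Set ℕ), ↑S ⊆ A ∧ (b \ ⋃ a ∈ S, a).Finite}

def CompSep (A : Set (Set ℕ)) : Prop :=
  ∀ b : Set ℕ, b ∉ adIdeal A → ∃ a ∈ A, a ⊆ b

noncomputable def bNum : Cardinal :=
  sInf {c | ∃ F : Set (ℕ → ℕ),
    (∀ g : ℕ → ℕ, ∃ f ∈ F, {n | g n < f n}.Infinite) ∧ Cardinal.mk F = c}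

def BlockSplitting (F : Set (Set ℕ)) : Prop :=
  ∀ s : ℕ → Finset ℕ, (∀ n, (s n).Nonempty) →
    (Pairwise fun m n => Disjoint (s m) (s n)) →
    (⋃ n, (s n : Set ℕ)) = Set.univ →
    ∃ x ∈ F, {n | (s n : Set ℕ) ⊆ x}.Infinite ∧ {n | (s n : Set ℕ) ∩ x = ∅}.Infinite

/-- `sel x false = x = x⁰`, `sel x true = xᶜ = x¹`. -/
def sel (x : Set ℕ) : Bool → Set ℕ
  | false => x
  | true => xᶜ

/-- An element of `2^{<κ}`: a binary sequence of some length `dom < κ`. -/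
structure PNode (κ : Ordinal) where
  dom : Ordinal
  dom_lt : dom < κ
  val : ∀ ξ : Ordinal, ξ < dom → Bool

/-- End-extension of nodes. -/
def PNode.Ext {κ : Ordinal} (σ τ : PNode κ) : Prop :=
  ∃ h : σ.dom ≤ τ.dom, ∀ ξ (hξ : ξ < σ.dom), σ.val ξ hξ = τ.val ξ (lt_of_lt_of_le hξ h)

/-!
If `𝔰` had countable cofinality, a splitting family of size `𝔰` would be a countable union
of families `G n` of size `< 𝔰`. A family of size `< 𝔰` is not splitting, and (relativising to an
infinite `a ≃ ℕ`) not even below any infinite `a`. So one can shrink a chain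
`ω ⊇ A 0 ⊇ A 1 ⊇ ⋯` of infinite sets with `A n` not split by `G n`; a pseudo-intersection of the
chain is split by no member of any `G n`, a contradiction. The same argument with singletons
`G n = {xₙ}` shows first that `𝔰` is uncountable.
-/

open Function
open scoped Cardinal

theorem Set.Infinite.exists_injective_range_subset {α : Type*} {a : Set α} (ha : a.Infinite) :
    ∃ g : ℕ → α, Injective g ∧ range g ⊆ a :=
  ⟨_, Subtype.val_injective.comp (Infinite.natEmbedding a ha).injective,
    range_subset_iff.2 fun n => (Infinite.natEmbedding a ha n).2⟩

theorem exists_infinite_diff_finite_of_antitone {A : ℕ → Set ℕ} (hA : Antitone A)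
    (hinf : ∀ n, (A n).Infinite) : ∃ b : Set ℕ, b.Infinite ∧ ∀ n, (b \ A n).Finite := by
  choose k hkA hk using fun n => (hinf n).exists_gt n
  refine ⟨range k, infinite_of_forall_exists_gt fun n => ⟨k n, mem_range_self n, hk n⟩,
    fun n => ((finite_Iio n).image k).subset ?_⟩
  rintro _ ⟨⟨m, rfl⟩, hm⟩
  exact ⟨m, lt_of_not_ge fun hnm => hm (hA hnm (hkA m)), rfl⟩

theorem Cardinal.exists_iUnion_eq_univ_of_cof_ord_le_aleph0 {β : Type*} (hβ : ℵ₀ ≤ #β)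
    (hcof : (#β).ord.cof ≤ ℵ₀) : ∃ G : ℕ → Set β, (∀ n, #(G n) < #β) ∧ ⋃ n, G n = Set.univ := by
  obtain ⟨e⟩ : Nonempty ((#β).ord.ToType ≃ β) := Cardinal.eq.1 (mk_ord_toType _)
  have : Nonempty (#β).ord.ToType := e.symm.nonempty_congr.1 (infinite_iff.2 hβ).nonempty
  obtain ⟨s, hs, hsmk⟩ := Order.exists_cof_eq (#β).ord.ToType
  rw [Ordinal.cof_toType] at hsmk
  obtain ⟨f, rfl⟩ := (le_aleph0_iff_set_countable.1 (hsmk ▸ hcof)).exists_eq_range hs.nonempty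
  refine ⟨fun n => e '' Iic (f n), fun n => ?_, eq_univ_of_forall fun y => ?_⟩
  · calc #(e '' Iic (f n)) ≤ #(Iic (f n)) := mk_image_le
      _ ≤ #(Iio (f n)) + 1 := Iio_insert (a := f n) ▸ mk_insert_le
      _ < #β := add_lt_of_lt hβ (by simpa using mk_Iio_lt (f n)) (one_lt_aleph0.trans_le hβ)
  · obtain ⟨_, ⟨n, rfl⟩, hn⟩ := hs (e.symm y)
    exact mem_iUnion.2 ⟨n, e.symm y, hn, e.apply_symm_apply y⟩

theorem Splits.mono {x a b : Set ℕ} (h : Splits x b) (hba : b ⊆ a) : Splits x a :=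
  ⟨h.1.mono (inter_subset_inter_left x hba), h.2.mono (sdiff_subset_sdiff_left hba)⟩

theorem Splits.of_diff_finite {x a b : Set ℕ} (h : Splits x b) (hba : (b \ a).Finite) :
    Splits x a := by
  refine ⟨fun ha => h.1 ((hba.union ha).subset ?_), fun ha => h.2 ((hba.union ha).subset ?_)⟩ <;>
    exact fun y hy => by by_cases hya : y ∈ a <;> simp_all

theorem splits_image_iff {g : ℕ → ℕ} (hg : Injective g) {x b : Set ℕ} :
    Splits x (g '' b) ↔ Splits (g ⁻¹' x) b := by
  simp only [Splits, ← image_inter_preimage, ← image_sdiff_preimage, infinite_image_iff hg.injOn]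

theorem splits_even_univ : Splits {n | Even n} univ := by
  refine ⟨?_, ?_⟩ <;> refine infinite_of_forall_exists_gt fun n => ?_
  · exact ⟨2 * n + 2, by simp [parity_simps], by omega⟩
  · exact ⟨2 * n + 1, by simp [parity_simps], by omega⟩

theorem exists_splits {a : Set ℕ} (ha : a.Infinite) : ∃ x, Splits x a := by
  obtain ⟨g, hg, hga⟩ := ha.exists_injective_range_subset
  refine ⟨g '' {n | Even n}, Splits.mono ?_ (image_univ (f := g) ▸ hga)⟩
  rw [splits_image_iff hg, hg.preimage_image]
  exact splits_even_univ

theorem SplittingFamily.mono {F F' : Set (Set ℕ)} (hF : SplittingFamily F) (h : F ⊆ F') :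
    SplittingFamily F' := fun a ha =>
  let ⟨x, hx, hxa⟩ := hF a ha
  ⟨x, h hx, hxa⟩

theorem splittingFamily_univ : SplittingFamily univ := fun _ ha =>
  let ⟨x, hx⟩ := exists_splits ha
  ⟨x, trivial, hx⟩

theorem exists_splittingFamily_mk_eq_sNum : ∃ F, SplittingFamily F ∧ #F = sNum :=
  show sNum ∈ {c | ∃ F : Set (Set ℕ), SplittingFamily F ∧ #F = c} from
    csInf_mem ⟨_, univ, splittingFamily_univ, rfl⟩

theorem sNum_le_mk {F : Set (Set ℕ)} (hF : SplittingFamily F) : sNum ≤ #F :=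
  csInf_le' ⟨F, hF, rfl⟩

def NowhereSplitting (F : Set (Set ℕ)) : Prop :=
  ∀ a : Set ℕ, a.Infinite → ∃ b ⊆ a, b.Infinite ∧ ∀ x ∈ F, ¬ Splits x b

theorem nowhereSplitting_singleton (x : Set ℕ) : NowhereSplitting {x} := by
  intro a ha
  rcases infinite_union.1 ((inter_union_sdiff a x).symm ▸ ha) with h | h
  · refine ⟨a ∩ x, inter_subset_left, h, ?_⟩
    rintro _ rfl ⟨-, hd⟩
    exact hd (finite_empty.subset fun y hy => hy.2 hy.1.2)
  · refine ⟨a \ x, sdiff_subset, h, ?_⟩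
    rintro _ rfl ⟨hi, -⟩
    exact hi (finite_empty.subset fun y hy => hy.1.2 hy.2)

theorem nowhereSplitting_of_mk_lt_sNum {F : Set (Set ℕ)} (hF : #F < sNum) :
    NowhereSplitting F := by
  intro a ha
  obtain ⟨g, hg, hga⟩ := ha.exists_injective_range_subset
  have hF' : ¬ SplittingFamily (preimage g '' F) := fun h =>
    (sNum_le_mk h).not_gt (Cardinal.mk_image_le.trans_lt hF)
  obtain ⟨b, hb, hbF⟩ : ∃ b : Set ℕ, b.Infinite ∧ ∀ x ∈ F, ¬ Splits (g ⁻¹' x) b := by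
    by_contra! h
    exact hF' fun b hb => let ⟨x, hx, hxb⟩ := h b hb; ⟨_, mem_image_of_mem _ hx, hxb⟩
  exact ⟨g '' b, (image_subset_range g b).trans hga, hb.image hg.injOn,
    fun x hx hxb => hbF x hx ((splits_image_iff hg).1 hxb)⟩

theorem not_splittingFamily_iUnion {G : ℕ → Set (Set ℕ)} (hG : ∀ n, NowhereSplitting (G n)) :
    ¬ SplittingFamily (⋃ n, G n) := by
  choose c hcs hcinf hcG using hG
  let A : ℕ → {s : Set ℕ // s.Infinite} := fun n =>
    Nat.rec ⟨univ, infinite_univ⟩ (fun n s => ⟨c n s.1 s.2, hcinf n s.1 s.2⟩) n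
  have hA : Antitone fun n => (A n).1 := antitone_nat_of_succ_le fun n => hcs n _ _
  obtain ⟨b, hb, hbA⟩ := exists_infinite_diff_finite_of_antitone hA fun n => (A n).2
  intro hF
  obtain ⟨x, hx, hxb⟩ := hF b hb
  obtain ⟨n, hxn⟩ := mem_iUnion.1 hx
  exact hcG n _ _ x hxn (hxb.of_diff_finite (hbA (n + 1)))

theorem not_splittingFamily_of_countable {F : Set (Set ℕ)} (hF : F.Countable) :
    ¬ SplittingFamily F := fun hsplit =>
  let ⟨h, hFh⟩ := countable_iff_exists_subset_range.1 hF
  not_splittingFamily_iUnion (fun n => nowhereSplitting_singleton (h n))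
    (hsplit.mono (iUnion_singleton_eq_range h ▸ hFh))

theorem aleph0_lt_sNum : ℵ₀ < sNum := by
  by_contra! h
  obtain ⟨F, hF, hFs⟩ := exists_splittingFamily_mk_eq_sNum
  exact not_splittingFamily_of_countable (Cardinal.le_aleph0_iff_set_countable.1 (hFs ▸ h)) hF

/-- The splitting number has uncountable cofinality. -/
theorem stmt10 : Cardinal.aleph0 < (Cardinal.ord sNum).cof := by
  by_contra! hcof
  obtain ⟨F, hF, hFs⟩ := exists_splittingFamily_mk_eq_sNum
  obtain ⟨G, hG, hcover⟩ := Cardinal.exists_iUnion_eq_univ_of_cof_ord_le_aleph0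
    (hFs ▸ aleph0_lt_sNum.le) (hFs ▸ hcof)
  refine not_splittingFamily_iUnion (G := fun n => Subtype.val '' G n)
    (fun n => nowhereSplitting_of_mk_lt_sNum (Cardinal.mk_image_le.trans_lt (hFs ▸ hG n)))
    (hF.mono ?_)
  intro x hx
  obtain ⟨n, hn⟩ := mem_iUnion.1 (hcover ▸ mem_univ (⟨x, hx⟩ : F))
  exact mem_iUnion.2 ⟨n, ⟨x, hx⟩, hn, rfl⟩
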